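/- Let f : ℝ → ℝ be three times continuously differentiable, let dt > 0, θ ∈ [0,1], t_n ∈ ℝ, set t^{n,θ} = t_n + (1+θ)dt/2, f^{n+1} = f(t_n + dt), f^n = f(t_n), and f^{n,θ} = ((1+θ)/2) f^{n+1} + ((1-θ)/2) f^n. Then f^{n,θ} = f(t^{n,θ}) + (1/8)(1+θ)(1-θ) dt² f''(t^{n,θ}) + R where |R| ≤ C·dt³ for a constant C depending only on sup |f'''| on [t_n, t_n+dt]. -/

import Mathlib

/-!
Expand `f` to second order about `c = t^{n,θ}`. The nodes `tn + dt` and `tn` lie at signed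
distances `(1 - θ) dt / 2` and `-(1 + θ) dt / 2` from `c`; the weights `(1 ± θ) / 2` make the
first-order terms cancel and turn the second-order terms into `(1 + θ)(1 - θ) dt² f''(c) / 8`.
The Lagrange remainders then contribute at most `M dt³ (1 - θ⁴) / 48`.
-/

open Set Nat

theorem taylorWithinEval_uIcc_eq_sum_iteratedDeriv {f : ℝ → ℝ} {n : ℕ}
    (hf : ContDiff ℝ n f) {a x : ℝ} (hax : a ≠ x) :
    taylorWithinEval f n (uIcc a x) a x =
      ∑ k ∈ Finset.range (n + 1), iteratedDeriv k f a * (x - a) ^ k / k ! := by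
  rw [taylor_within_apply]
  refine Finset.sum_congr rfl fun k hk => ?_
  have hkn : (k : WithTop ℕ∞) ≤ n := by exact_mod_cast Finset.mem_range_succ_iff.mp hk
  rw [iteratedDerivWithin_eq_iteratedDeriv (uniqueDiffOn_uIcc hax)
    ((hf.of_le hkn).contDiffAt) left_mem_uIcc, smul_eq_mul]
  ring

theorem abs_sub_sum_iteratedDeriv_le {f : ℝ → ℝ} {n : ℕ} (hf : ContDiff ℝ (n + 1) f)
    {a x M : ℝ} (hM : ∀ t ∈ uIcc a x, |iteratedDeriv (n + 1) f t| ≤ M) :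
    |f x - ∑ k ∈ Finset.range (n + 1), iteratedDeriv k f a * (x - a) ^ k / k !|
      ≤ M * |x - a| ^ (n + 1) / (n + 1)! := by
  rcases eq_or_ne a x with rfl | hax
  · simp [Finset.sum_range_succ']
  obtain ⟨t, ht, hrem⟩ := taylor_mean_remainder_lagrange_iteratedDeriv hax hf.contDiffOn
  rw [← taylorWithinEval_uIcc_eq_sum_iteratedDeriv (hf.of_le (by norm_cast; omega)) hax, hrem,
    abs_div, abs_mul, abs_pow, Nat.abs_cast]
  gcongr
  exact hM t (Ioo_subset_Icc_self ht)

theorem abs_sub_taylor_two_le {f : ℝ → ℝ} (hf : ContDiff ℝ 3 f) {a x M : ℝ}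
    (hM : ∀ t ∈ uIcc a x, |iteratedDeriv 3 f t| ≤ M) :
    |f x - (f a + deriv f a * (x - a) + iteratedDeriv 2 f a * (x - a) ^ 2 / 2)|
      ≤ M * |x - a| ^ 3 / 6 := by
  have h := abs_sub_sum_iteratedDeriv_le (n := 2) hf hM
  simp only [Finset.sum_range_succ, Finset.sum_range_zero, iteratedDeriv_zero,
    iteratedDeriv_one] at h
  convert h using 3 <;> norm_num [Nat.factorial]

theorem abs_theta_combination_le {θ dt M r r' : ℝ} (hθ : θ ∈ Icc (0:ℝ) 1) (hdt : 0 ≤ dt)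
    (hM : 0 ≤ M) (hr : |r| ≤ M * ((1 - θ) * dt / 2) ^ 3 / 6)
    (hr' : |r'| ≤ M * ((1 + θ) * dt / 2) ^ 3 / 6) :
    |(1 + θ) / 2 * r + (1 - θ) / 2 * r'| ≤ M * dt ^ 3 := by
  obtain ⟨hθ0, hθ1⟩ := hθ
  calc _ ≤ (1 + θ) / 2 * |r| + (1 - θ) / 2 * |r'| := by
        refine (abs_add_le _ _).trans_eq ?_
        rw [abs_mul, abs_mul, abs_of_nonneg (by linarith : (0:ℝ) ≤ (1 + θ) / 2),
          abs_of_nonneg (by linarith : (0:ℝ) ≤ (1 - θ) / 2)]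
    _ ≤ (1 + θ) / 2 * (M * ((1 - θ) * dt / 2) ^ 3 / 6)
          + (1 - θ) / 2 * (M * ((1 + θ) * dt / 2) ^ 3 / 6) := by
        gcongr
    _ = M * dt ^ 3 * (1 - θ ^ 4) / 48 := by ring
    _ ≤ M * dt ^ 3 := by
        have : 0 ≤ M * dt ^ 3 := by positivity
        nlinarith [pow_nonneg hθ0 4]

/-- θ-weighted average Taylor expansion about the intermediate time `t^{n,θ}`. -/
theorem theta_average_taylor (f : ℝ → ℝ) (hf : ContDiff ℝ 3 f) (dt θ tn M : ℝ)
    (hdt : 0 < dt) (hθ : θ ∈ Set.Icc (0:ℝ) 1)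
    (hM : ∀ t ∈ Set.Icc tn (tn + dt), |iteratedDeriv 3 f t| ≤ M) :
    ∃ R : ℝ,
      ((1 + θ) / 2) * f (tn + dt) + ((1 - θ) / 2) * f tn
        = f (tn + (1 + θ) * dt / 2)
          + (1 / 8) * (1 + θ) * (1 - θ) * dt ^ 2
              * iteratedDeriv 2 f (tn + (1 + θ) * dt / 2)
          + R
      ∧ |R| ≤ M * dt ^ 3 := by
  obtain ⟨hθ0, hθ1⟩ := hθ
  have hle : tn ≤ tn + dt := by linarith
  have hc : tn + (1 + θ) * dt / 2 ∈ Icc tn (tn + dt) := ⟨by nlinarith, by nlinarith⟩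
  have hdnext : |tn + dt - (tn + (1 + θ) * dt / 2)| = (1 - θ) * dt / 2 := by
    rw [abs_of_nonneg (by nlinarith)]; ring
  have hdprev : |tn - (tn + (1 + θ) * dt / 2)| = (1 + θ) * dt / 2 := by
    rw [abs_of_nonpos (by nlinarith)]; ring
  have hM0 : 0 ≤ M := (abs_nonneg _).trans (hM tn (left_mem_Icc.mpr hle))
  have hRnext := abs_sub_taylor_two_le hf fun t ht =>
    hM t (uIcc_subset_Icc hc (right_mem_Icc.mpr hle) ht)
  have hRprev := abs_sub_taylor_two_le hf fun t ht =>
    hM t (uIcc_subset_Icc hc (left_mem_Icc.mpr hle) ht)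
  rw [hdnext] at hRnext
  rw [hdprev] at hRprev
  set c := tn + (1 + θ) * dt / 2
  set T : ℝ → ℝ := fun x => f c + deriv f c * (x - c) + iteratedDeriv 2 f c * (x - c) ^ 2 / 2
  exact ⟨(1 + θ) / 2 * (f (tn + dt) - T (tn + dt)) + (1 - θ) / 2 * (f tn - T tn), by ring,
    abs_theta_combination_le ⟨hθ0, hθ1⟩ hdt.le hM0 hRnext hRprev⟩
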